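/- Let F be a finite chordal polynomial set in K[x_1,...,x_n] such that x_1 < ... < x_n is a perfect elimination ordering of G(F). Let P and Q be finite polynomial sets with G(P) ⊆ G(F) and G(Q) ⊆ G(F), let k be an index, and let T_1 ∈ Q^(k) and T_2 ∈ P^(k). Let N and N' be finite polynomial sets with supp(N) ⊆ supp(T_1) ∪ supp(T_2) and supp(N') ⊆ supp(T_1) ∪ supp(T_2). Then G((P \ {T_2}) ∪ N) ⊆ G(F) and G(Q ∪ N') ⊆ G(F). -/

import Mathlib

open MvPolynomial

variable {K : Type*} [Field K] {n : ℕ}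

/-- The set of variables effectively appearing in a polynomial. -/
def psupp (F : MvPolynomial (Fin n) K) : Set (Fin n) := ↑F.vars

/-- The set of variables appearing in a set of polynomials. -/
def ssupp (P : Set (MvPolynomial (Fin n) K)) : Set (Fin n) :=
  ⋃ F ∈ P, psupp F

/-- Adjacency in the associated graph `G(P)`: `p ≠ q` and some polynomial of `P`
contains both variables. -/
def adjG (P : Set (MvPolynomial (Fin n) K)) (p q : Fin n) : Prop :=
  p ≠ q ∧ ∃ F ∈ P, p ∈ psupp F ∧ q ∈ psupp F

/-- `G(P) ⊆ G(Q)`: every edge of `G(P)` is an edge of `G(Q)`. -/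
def subG (P Q : Set (MvPolynomial (Fin n) K)) : Prop :=
  ∀ p q, adjG P p q → adjG Q p q

/-- The natural ordering `x_1 < ... < x_n` of the variables is a perfect elimination
ordering of `G(P)`; in particular `G(P)` is chordal. -/
def isPEO (P : Set (MvPolynomial (Fin n) K)) : Prop :=
  ∀ p q k : Fin n, p < k → q < k → p ≠ q → adjG P p k → adjG P q k → adjG P p q

/-- `F` is nonconstant with leading variable `x_k`. -/
def hasLv (F : MvPolynomial (Fin n) K) (k : Fin n) : Prop :=
  k ∈ psupp F ∧ ∀ j ∈ psupp F, j ≤ k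

/-- `P^(k)`: the polynomials of `P` with leading variable `x_k`. -/
def levelSet (P : Set (MvPolynomial (Fin n) K)) (k : Fin n) :
    Set (MvPolynomial (Fin n) K) :=
  {F | F ∈ P ∧ hasLv F k}

theorem adjG.symm {P : Set (MvPolynomial (Fin n) K)} {p q : Fin n} (h : adjG P p q) :
    adjG P q p :=
  let ⟨hpq, F, hF, hp, hq⟩ := h
  ⟨hpq.symm, F, hF, hq, hp⟩

instance {P : Set (MvPolynomial (Fin n) K)} : Std.Symm (adjG P) :=
  ⟨fun _ _ => adjG.symm⟩

theorem subG.pairwise_psupp {P Fs : Set (MvPolynomial (Fin n) K)} (hPF : subG P Fs)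
    {F : MvPolynomial (Fin n) K} (hF : F ∈ P) : (psupp F).Pairwise (adjG Fs) :=
  fun _ hp _ hq hpq => hPF _ _ ⟨hpq, F, hF, hp, hq⟩

theorem subG.mono {P P' Fs : Set (MvPolynomial (Fin n) K)} (hPF : subG P Fs) (h : P' ⊆ P) :
    subG P' Fs :=
  fun p q ⟨hpq, F, hF, hp, hq⟩ => hPF p q ⟨hpq, F, h hF, hp, hq⟩

theorem subG.union {P P' Fs : Set (MvPolynomial (Fin n) K)} (hPF : subG P Fs)
    (hP'F : subG P' Fs) : subG (P ∪ P') Fs := by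
  rintro p q ⟨hpq, F, hF | hF, hp, hq⟩
  · exact hPF p q ⟨hpq, F, hF, hp, hq⟩
  · exact hP'F p q ⟨hpq, F, hF, hp, hq⟩

theorem subG_of_ssupp_subset {N Fs : Set (MvPolynomial (Fin n) K)} {S : Set (Fin n)}
    (hS : S.Pairwise (adjG Fs)) (hN : ssupp N ⊆ S) : subG N Fs :=
  fun _ _ ⟨hpq, _, hF, hp, hq⟩ =>
    hS (hN (Set.mem_biUnion hF hp)) (hN (Set.mem_biUnion hF hq)) hpq

/-- Vertices below `k` in `S₁` and in `S₂` are both earlier neighbours of `k`, hence adjacent. -/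
theorem isPEO.pairwise_union {Fs : Set (MvPolynomial (Fin n) K)} (hpeo : isPEO Fs)
    {S₁ S₂ : Set (Fin n)} {k : Fin n} (h₁ : S₁.Pairwise (adjG Fs)) (h₂ : S₂.Pairwise (adjG Fs))
    (hk₁ : k ∈ S₁) (hle₁ : ∀ j ∈ S₁, j ≤ k) (hk₂ : k ∈ S₂) (hle₂ : ∀ j ∈ S₂, j ≤ k) :
    (S₁ ∪ S₂).Pairwise (adjG Fs) := by
  refine Set.pairwise_union_of_symm.2 ⟨h₁, h₂, fun p hp q hq hpq => ?_⟩
  rcases (hle₁ p hp).eq_or_lt with rfl | hpk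
  · exact h₂ hk₂ hq hpq
  rcases (hle₂ q hq).eq_or_lt with rfl | hqk
  · exact h₁ hp hk₁ hpq
  exact hpeo p q k hpk hqk hpq (h₁ hp hk₁ hpk.ne) (h₂ hq hk₂ hqk.ne)

theorem statement13_general {K : Type*} [Field K] {n : ℕ}
    (Fs : Set (MvPolynomial (Fin n) K)) (hpeo : isPEO Fs)
    (P Q : Set (MvPolynomial (Fin n) K))
    (hPF : subG P Fs) (hQF : subG Q Fs)
    (k : Fin n) (T₁ T₂ : MvPolynomial (Fin n) K)
    (hT₁ : T₁ ∈ levelSet Q k) (hT₂ : T₂ ∈ levelSet P k)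
    (N N' : Set (MvPolynomial (Fin n) K))
    (hN : ssupp N ⊆ psupp T₁ ∪ psupp T₂) (hN' : ssupp N' ⊆ psupp T₁ ∪ psupp T₂) :
    subG ((P \ {T₂}) ∪ N) Fs ∧ subG (Q ∪ N') Fs := by
  obtain ⟨hT₁Q, hkT₁, hleT₁⟩ := hT₁
  obtain ⟨hT₂P, hkT₂, hleT₂⟩ := hT₂
  have hclique : (psupp T₁ ∪ psupp T₂).Pairwise (adjG Fs) :=
    hpeo.pairwise_union (hQF.pairwise_psupp hT₁Q) (hPF.pairwise_psupp hT₂P)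
      hkT₁ hleT₁ hkT₂ hleT₂
  exact ⟨(hPF.mono Set.sdiff_subset).union (subG_of_ssupp_subset hclique hN),
    hQF.union (subG_of_ssupp_subset hclique hN')⟩

/-- let `Fs` be a finite chordal polynomial set whose natural variable
ordering is a perfect elimination ordering, and `P`, `Q` finite polynomial sets with
`G(P) ⊆ G(Fs)` and `G(Q) ⊆ G(Fs)`.  Let `T₁ ∈ Q^(k)` and `T₂ ∈ P^(k)`, and let
`N`, `N'` be finite polynomial sets with `supp N ⊆ supp T₁ ∪ supp T₂` and
`supp N' ⊆ supp T₁ ∪ supp T₂`.  Then `G((P \ {T₂}) ∪ N) ⊆ G(Fs)` and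
`G(Q ∪ N') ⊆ G(Fs)`. -/
theorem statement13 {K : Type*} [Field K] {n : ℕ}
    (Fs : Set (MvPolynomial (Fin n) K)) (hFfin : Fs.Finite) (hpeo : isPEO Fs)
    (P Q : Set (MvPolynomial (Fin n) K)) (hPfin : P.Finite) (hQfin : Q.Finite)
    (hPF : subG P Fs) (hQF : subG Q Fs)
    (k : Fin n) (T₁ T₂ : MvPolynomial (Fin n) K)
    (hT₁ : T₁ ∈ levelSet Q k) (hT₂ : T₂ ∈ levelSet P k)
    (N N' : Set (MvPolynomial (Fin n) K)) (hNfin : N.Finite) (hN'fin : N'.Finite)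
    (hN : ssupp N ⊆ psupp T₁ ∪ psupp T₂) (hN' : ssupp N' ⊆ psupp T₁ ∪ psupp T₂) :
    subG ((P \ {T₂}) ∪ N) Fs ∧ subG (Q ∪ N') Fs :=
  statement13_general Fs hpeo P Q hPF hQF k T₁ T₂ hT₁ hT₂ N N' hN hN'
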